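/- There exists a c.e. set A ⊆ ℕ which is not generically similar to any co-c.e. set (i.e. for every c.e. set W, the symmetric difference A △ (ℕ \ W) does not have density 0); consequently A is neither coarsely computable nor generically computable. -/

import Mathlib

open Filter

open scoped Classical in
/-- `ρ_n(A) = |A ∩ {0,…,n}| / (n+1)`. -/
noncomputable def partialDensity (A : Set ℕ) (n : ℕ) : ℝ :=
  ((Finset.range (n + 1)).filter (· ∈ A)).card / (n + 1)

/-- The upper density of `A`: `limsup_n ρ_n(A)`. -/
noncomputable def upperDensity (A : Set ℕ) : ℝ :=
  Filter.limsup (partialDensity A) Filter.atTop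

/-- `A` has asymptotic density `r`: `ρ_n(A) → r`. -/
def HasDensity (A : Set ℕ) (r : ℝ) : Prop :=
  Filter.Tendsto (partialDensity A) Filter.atTop (nhds r)

open scoped Classical in
/-- The characteristic function of `A` (with values in `{0,1} ⊆ ℕ`). -/
noncomputable def charFun (A : Set ℕ) : ℕ → ℕ := fun n => if n ∈ A then 1 else 0

/-- `Φ` is a generic description of `A`: `Φ(x) = χ_A(x)` whenever `Φ(x)` is defined,
and the domain of `Φ` has density 1. -/
def IsGenericDescription (Φ : ℕ →. ℕ) (A : Set ℕ) : Prop :=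
  (∀ x m, m ∈ Φ x → m = charFun A x) ∧ HasDensity {x | (Φ x).Dom} 1

/-- `A` is generically computable: some partial computable function is a generic
description of `A`. -/
def GenericallyComputable (A : Set ℕ) : Prop :=
  ∃ Φ : ℕ →. ℕ, Partrec Φ ∧ IsGenericDescription Φ A

/-- `A` is computably enumerable: `A` is the domain of a partial computable function. -/
def CE (A : Set ℕ) : Prop :=
  ∃ f : ℕ →. ℕ, Partrec f ∧ A = {x | (f x).Dom}

/-- `A` is a computable set. -/
def ComputableSet (A : Set ℕ) : Prop := ComputablePred (· ∈ A)

/-- `A` is immune: infinite, with no infinite c.e. subset. -/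
def Immune (A : Set ℕ) : Prop :=
  A.Infinite ∧ ∀ W : Set ℕ, CE W → W.Infinite → ¬W ⊆ A

/-- `A` is bi-immune: both `A` and its complement are immune. -/
def BiImmune (A : Set ℕ) : Prop := Immune A ∧ Immune Aᶜ

/-- `A` and `B` are generically similar: their symmetric difference has density 0. -/
def GenericallySimilar (A B : Set ℕ) : Prop := HasDensity (symmDiff A B) 0

/-- `A` is coarsely computable: generically similar to a computable set. -/
def CoarselyComputable (A : Set ℕ) : Prop :=
  ∃ C : Set ℕ, ComputableSet C ∧ GenericallySimilar A C

/-- `R_k = {m : 2^k ∣ m, 2^(k+1) ∤ m}`. -/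
def Rset (k : ℕ) : Set ℕ := {m | 2 ^ k ∣ m ∧ ¬2 ^ (k + 1) ∣ m}

/-- `R(A) = ⋃_{n ∈ A} R_n`. -/
def RofSet (A : Set ℕ) : Set ℕ := ⋃ n ∈ A, Rset n

/-- Partial functions `ℕ →. ℕ` computable relative to a (total) oracle `O : ℕ → ℕ`. -/
inductive OracleRecursiveIn (O : ℕ → ℕ) : (ℕ →. ℕ) → Prop
  | zero : OracleRecursiveIn O (pure 0)
  | succ : OracleRecursiveIn O fun n => Part.some (n + 1)
  | left : OracleRecursiveIn O fun n => Part.some (Nat.unpair n).1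
  | right : OracleRecursiveIn O fun n => Part.some (Nat.unpair n).2
  | oracle : OracleRecursiveIn O fun n => Part.some (O n)
  | pair {f g : ℕ →. ℕ} : OracleRecursiveIn O f → OracleRecursiveIn O g →
      OracleRecursiveIn O fun n => Nat.pair <$> f n <*> g n
  | comp {f g : ℕ →. ℕ} : OracleRecursiveIn O f → OracleRecursiveIn O g →
      OracleRecursiveIn O fun n => g n >>= f
  | prec {f g : ℕ →. ℕ} : OracleRecursiveIn O f → OracleRecursiveIn O g →
      OracleRecursiveIn O (Nat.unpaired fun a n =>
        n.rec (f a) fun y IH => do let i ← IH; g (Nat.pair a (Nat.pair y i)))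
  | rfind {f : ℕ →. ℕ} : OracleRecursiveIn O f →
      OracleRecursiveIn O fun a => Nat.rfind fun n => (fun m => m = 0) <$> f (Nat.pair a n)

/-- `A ≤_T B`: the characteristic function of `A` is computable relative to `B`. -/
def SetTuringReducible (A B : Set ℕ) : Prop :=
  OracleRecursiveIn (charFun B) fun n => Part.some (charFun A n)

/-- `A ≡_T B`. -/
def SetTuringEquivalent (A B : Set ℕ) : Prop :=
  SetTuringReducible A B ∧ SetTuringReducible B A

/-!
Cut `ℕ` into the blocks `[2^j, 2^(j+1))` and devote block `j` to the c.e. set `W_e` with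
`e = (unpair j).1`, so that every `W_e` owns infinitely many blocks. Block `j` is enumerated into
`A` as soon as `W_e` is seen to contain half of it. If this happens, `A ∩ W_e` covers half the
block; otherwise `A` misses the block and `W_eᶜ` covers more than half of it. Either way
`A △ W_eᶜ` fills a quarter of `[0, 2^(j+1))`, so it does not have density `0`.
A computable set is co-c.e., and if `Φ` is a generic description of `A`, then `A` is generically
similar to the complement of the c.e. set `{x | Φ x = 0}`.
-/

open Finset Nat.Partrec Code

lemma partialDensity_nonneg (S : Set ℕ) (n : ℕ) : 0 ≤ partialDensity S n := by
  unfold partialDensity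
  positivity

lemma partialDensity_mono {S T : Set ℕ} (h : S ⊆ T) (n : ℕ) :
    partialDensity S n ≤ partialDensity T n := by
  unfold partialDensity
  gcongr

open scoped Classical in
lemma partialDensity_compl (S : Set ℕ) (n : ℕ) :
    partialDensity Sᶜ n = 1 - partialDensity S n := by
  unfold partialDensity
  have hcard :
      #((range (n + 1)).filter (· ∈ Sᶜ)) + #((range (n + 1)).filter (· ∈ S)) = n + 1 := by
    simpa [add_comm] using card_filter_add_card_filter_not (s := range (n + 1)) (· ∈ S)
  rw [eq_sub_iff_add_eq, ← add_div, div_eq_one_iff_eq (by positivity)]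
  norm_cast
  convert hcard

lemma HasDensity.compl {S : Set ℕ} {r : ℝ} (h : HasDensity S r) : HasDensity Sᶜ (1 - r) :=
  (h.const_sub 1).congr fun n => (partialDensity_compl S n).symm

lemma HasDensity.zero_of_subset {S T : Set ℕ} (hT : HasDensity T 0) (h : S ⊆ T) :
    HasDensity S 0 :=
  squeeze_zero (partialDensity_nonneg S) (partialDensity_mono h) hT

lemma not_hasDensity_zero_of_frequently {S : Set ℕ} {ε : ℝ} (hε : 0 < ε)
    (h : ∃ᶠ n in atTop, ε ≤ partialDensity S n) : ¬HasDensity S 0 := fun h0 =>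
  let ⟨_, hle, hlt⟩ := (h.and_eventually (h0.eventually_lt_const hε)).exists
  hle.not_gt hlt

lemma CE.of_rePred {p : ℕ → Prop} (h : REPred p) : CE {x | p x} :=
  ⟨fun x => (Part.assert (p x) fun _ => Part.some ()).map fun _ => 0,
    h.map (Computable.const 0).to₂, by ext x; simp [Part.assert]⟩

lemma CE.exists_code {W : Set ℕ} (h : CE W) : ∃ c : Code, W = {x | (eval c x).Dom} := by
  obtain ⟨f, hf, rfl⟩ := h
  obtain ⟨c, rfl⟩ := Nat.Partrec.Code.exists_code.1 (Partrec.nat_iff.1 hf)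
  exact ⟨c, rfl⟩

lemma ComputableSet.ce_compl {C : Set ℕ} (h : ComputableSet C) : CE Cᶜ :=
  CE.of_rePred (ComputablePred.not h).to_re

lemma rePred_exists_of_primrecRel {p : ℕ → ℕ → Prop} (hp : PrimrecRel p) :
    REPred fun m => ∃ n, p m n := by
  classical
  have h : Partrec fun m => Nat.rfind fun n => Part.some (decide (p m n)) :=
    Partrec.rfind hp.decide.to_comp.partrec₂
  exact h.dom_re.of_eq fun m => Nat.rfind_dom.trans (by simp)

lemma dom_of_evaln_isSome {c : Code} {s x : ℕ} (h : (evaln s c x).isSome) : (eval c x).Dom :=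
  let ⟨_, hy⟩ := Option.isSome_iff_exists.1 h
  Part.dom_iff_mem.2 ⟨_, evaln_sound hy⟩

lemma eventually_evaln_isSome {c : Code} {x : ℕ} (h : (eval c x).Dom) :
    ∀ᶠ s in atTop, (evaln s c x).isSome := by
  obtain ⟨k, hk⟩ := evaln_complete.1 (Part.get_mem h)
  exact eventually_atTop.2 ⟨k, fun s hs => Option.isSome_iff_exists.2 ⟨_, evaln_mono hs hk⟩⟩

lemma GenericallyComputable.exists_ce_hasDensity_symmDiff_compl {A : Set ℕ}
    (h : GenericallyComputable A) : ∃ W, CE W ∧ HasDensity (symmDiff A Wᶜ) 0 := by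
  obtain ⟨Φ, hΦ, hval, hdom⟩ := h
  obtain ⟨c, rfl⟩ := Nat.Partrec.Code.exists_code.1 (Partrec.nat_iff.1 hΦ)
  have hW : CE {x | 0 ∈ eval c x} := by
    refine CE.of_rePred ((rePred_exists_of_primrecRel (p := fun x s => evaln s c x = some 0)
      ?_).of_eq fun x => evaln_complete.symm)
    exact Primrec.eq.comp (primrec_evaln.comp ((Primrec.snd.pair (.const c)).pair .fst))
      (.const (some 0))
  have hundef : HasDensity {x | (eval c x).Dom}ᶜ 0 := by simpa using hdom.compl
  refine ⟨_, hW, hundef.zero_of_subset fun x hx hd => ?_⟩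
  have hchar := hval x _ (Part.get_mem hd)
  rcases Set.mem_symmDiff.1 hx with ⟨hA, h0⟩ | ⟨h0, hA⟩
  · have := Part.mem_unique (Part.get_mem hd) (not_not.1 h0)
    simp [charFun, hA, this] at hchar
  · simp only [charFun, hA, if_false] at hchar
    exact h0 (hchar ▸ Part.get_mem hd)

def dyadicBlock (j : ℕ) : Finset ℕ := Ico (2 ^ j) (2 ^ (j + 1))

lemma card_dyadicBlock (j : ℕ) : #(dyadicBlock j) = 2 ^ j := by
  rw [dyadicBlock, Nat.card_Ico, pow_succ]
  omega

lemma dyadicBlock_subset_range (j : ℕ) : dyadicBlock j ⊆ range (2 ^ (j + 1)) := by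
  intro x hx
  exact mem_range.2 (mem_Ico.1 hx).2

lemma eq_of_mem_dyadicBlock {i j m : ℕ} (hi : m ∈ dyadicBlock i) (hj : m ∈ dyadicBlock j) :
    i = j := by
  rw [dyadicBlock, mem_Ico] at hi hj
  rw [← Nat.log_eq_of_pow_le_of_lt_pow hi.1 hi.2, Nat.log_eq_of_pow_le_of_lt_pow hj.1 hj.2]

/-- The number of elements of `dyadicBlock j` seen in the domain of `c` within `s` steps, counted
in a list so as to be visibly primitive recursive (see `stageCount_eq_card`). -/
def stageCount (c : Code) (j s : ℕ) : ℕ :=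
  ((List.range (2 ^ (j + 1))).filter fun x => 2 ^ j ≤ x ∧ (evaln s c x).isSome).length

lemma stageCount_eq_card (c : Code) (j s : ℕ) :
    stageCount c j s = #((dyadicBlock j).filter fun x => (evaln s c x).isSome) := by
  change #((range _).filter _) = _
  congr 1
  ext x
  simp only [dyadicBlock, mem_filter, mem_range, mem_Ico]
  tauto

lemma primrec_two_pow : Primrec fun j : ℕ => 2 ^ j :=
  (Primrec₂.unpaired'.1 Nat.Primrec.pow).comp (Primrec.const 2) Primrec.id

lemma primrec_stageCount : Primrec fun a : Code × ℕ × ℕ => stageCount a.1 a.2.1 a.2.2 := by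
  have hseen : PrimrecRel fun (x : ℕ) (a : Code × ℕ × ℕ) =>
      2 ^ a.2.1 ≤ x ∧ (evaln a.2.2 a.1 x).isSome = true :=
    (Primrec.nat_le.comp (primrec_two_pow.comp (Primrec.fst.comp (Primrec.snd.comp Primrec.snd)))
      Primrec.fst).and
    (Primrec.eq.comp (Primrec.option_isSome.comp (primrec_evaln.comp
      (((Primrec.snd.comp (Primrec.snd.comp Primrec.snd)).pair
        (Primrec.fst.comp Primrec.snd)).pair Primrec.fst))) (Primrec.const true))
  exact Primrec.list_length.comp (hseen.listFilter.comp (Primrec.list_range.comp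
    (primrec_two_pow.comp (Primrec.succ.comp (Primrec.fst.comp Primrec.snd)))) Primrec.id)

def BlockFilled (j : ℕ) : Prop :=
  ∃ s, 2 ^ j ≤ 2 * stageCount (Denumerable.ofNat Code j.unpair.1) j s

def diagSet : Set ℕ := {m | ∃ j, m ∈ dyadicBlock j ∧ BlockFilled j}

lemma ce_diagSet : CE diagSet := by
  have hj : Primrec fun a : ℕ × ℕ => a.2.unpair.1 :=
    Primrec.fst.comp (Primrec.unpair.comp .snd)
  have hs : Primrec fun a : ℕ × ℕ => a.2.unpair.2 :=
    Primrec.snd.comp (Primrec.unpair.comp .snd)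
  have hfilled : PrimrecRel fun m n : ℕ => (2 ^ n.unpair.1 ≤ m ∧ m < 2 ^ (n.unpair.1 + 1)) ∧
      2 ^ n.unpair.1 ≤
        2 * stageCount (Denumerable.ofNat Code n.unpair.1.unpair.1) n.unpair.1 n.unpair.2 :=
    ((Primrec.nat_le.comp (primrec_two_pow.comp hj) .fst).and
      (Primrec.nat_lt.comp .fst (primrec_two_pow.comp (Primrec.succ.comp hj)))).and
    (Primrec.nat_le.comp (primrec_two_pow.comp hj) (Primrec.nat_mul.comp (.const 2)
      (primrec_stageCount.comp (((Primrec.ofNat Code).comp (Primrec.fst.comp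
        (Primrec.unpair.comp hj))).pair (hj.pair hs)))))
  convert CE.of_rePred (rePred_exists_of_primrecRel hfilled) using 1
  ext m
  simp only [diagSet, BlockFilled, dyadicBlock, mem_Ico, Set.mem_ofPred_eq]
  constructor
  · rintro ⟨j, hm, s, hs⟩
    exact ⟨Nat.pair j s, by simpa using ⟨hm, hs⟩⟩
  · rintro ⟨n, hm, hs⟩
    exact ⟨_, hm, _, hs⟩

lemma dyadicBlock_subset_diagSet {j : ℕ} (h : BlockFilled j) : ↑(dyadicBlock j) ⊆ diagSet :=
  fun _ hm => ⟨j, hm, h⟩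

lemma notMem_diagSet_of_not_blockFilled {j m : ℕ} (h : ¬BlockFilled j)
    (hm : m ∈ dyadicBlock j) :
    m ∉ diagSet := by
  rintro ⟨i, hi, hfilled⟩
  exact h (eq_of_mem_dyadicBlock hi hm ▸ hfilled)

open scoped Classical in
lemma stageCount_le_card_dom (c : Code) (j s : ℕ) :
    stageCount c j s ≤ #((dyadicBlock j).filter fun x => (eval c x).Dom) := by
  rw [stageCount_eq_card]
  exact card_le_card (monotone_filter_right _ fun _ _ => dom_of_evaln_isSome)

open scoped Classical in
lemma exists_card_dom_le_stageCount (c : Code) (j : ℕ) :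
    ∃ s, #((dyadicBlock j).filter fun x => (eval c x).Dom) ≤ stageCount c j s := by
  have h : ∀ᶠ s in atTop,
      ∀ x ∈ (dyadicBlock j).filter fun x => (eval c x).Dom, (evaln s c x).isSome :=
    (eventually_all_finset _).2 fun x hx => eventually_evaln_isSome (mem_filter.1 hx).2
  obtain ⟨s, hs⟩ := h.exists
  refine ⟨s, ?_⟩
  rw [stageCount_eq_card]
  exact card_le_card fun x hx => mem_filter.2 ⟨(mem_filter.1 hx).1, hs x hx⟩

open scoped Classical in
lemma two_pow_le_two_mul_card_symmDiff {c : Code} {j : ℕ}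
    (hj : Denumerable.ofNat Code j.unpair.1 = c) :
    2 ^ j ≤ 2 * #((dyadicBlock j).filter (· ∈ symmDiff diagSet {x | (eval c x).Dom}ᶜ)) := by
  by_cases hfilled : BlockFilled j
  · obtain ⟨s, hs⟩ := id hfilled
    have hsub : (dyadicBlock j).filter (fun x => (eval c x).Dom) ⊆
        (dyadicBlock j).filter (· ∈ symmDiff diagSet {x | (eval c x).Dom}ᶜ) := fun x hx => by
      obtain ⟨hxb, hxW⟩ := mem_filter.1 hx
      exact mem_filter.2
        ⟨hxb, Or.inl ⟨dyadicBlock_subset_diagSet hfilled hxb, not_not.2 hxW⟩⟩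
    calc 2 ^ j ≤ 2 * stageCount c j s := hj ▸ hs
      _ ≤ 2 * #((dyadicBlock j).filter fun x => (eval c x).Dom) := by
        gcongr; exact stageCount_le_card_dom c j s
      _ ≤ _ := by gcongr
  · obtain ⟨s, hs⟩ := exists_card_dom_le_stageCount c j
    have hlt : 2 * stageCount c j s < 2 ^ j := by
      subst hj
      exact not_le.1 fun h => hfilled ⟨s, h⟩
    have hsub : (dyadicBlock j).filter (fun x => ¬(eval c x).Dom) ⊆
        (dyadicBlock j).filter (· ∈ symmDiff diagSet {x | (eval c x).Dom}ᶜ) := fun x hx => by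
      obtain ⟨hxb, hxW⟩ := mem_filter.1 hx
      exact mem_filter.2 ⟨hxb, Or.inr ⟨hxW, notMem_diagSet_of_not_blockFilled hfilled hxb⟩⟩
    have hsplit := card_filter_add_card_filter_not (s := dyadicBlock j) fun x => (eval c x).Dom
    rw [card_dyadicBlock] at hsplit
    have := card_le_card hsub
    omega

open scoped Classical in
lemma quarter_le_partialDensity_symmDiff {c : Code} {j : ℕ}
    (hj : Denumerable.ofNat Code j.unpair.1 = c) :
    1 / 4 ≤ partialDensity (symmDiff diagSet {x | (eval c x).Dom}ᶜ) (2 ^ (j + 1) - 1) := by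
  have hcard : 2 ^ (j + 1) ≤
      4 * #((range (2 ^ (j + 1))).filter (· ∈ symmDiff diagSet {x | (eval c x).Dom}ᶜ)) := by
    have := card_le_card (filter_subset_filter
      (· ∈ symmDiff diagSet {x | (eval c x).Dom}ᶜ) (dyadicBlock_subset_range j))
    have := two_pow_le_two_mul_card_symmDiff hj
    have := pow_succ 2 j
    omega
  have hn : ((2 ^ (j + 1) - 1 : ℕ) : ℝ) + 1 = 2 ^ (j + 1) := by
    rw [Nat.cast_sub Nat.one_le_two_pow]
    push_cast
    ring
  unfold partialDensity
  rw [Nat.sub_add_cancel Nat.one_le_two_pow, hn, le_div_iff₀ (by positivity)]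
  have hcard' := (Nat.cast_le (α := ℝ)).2 hcard
  push_cast at hcard'
  linarith

lemma not_hasDensity_symmDiff_diagSet_compl {W : Set ℕ} (hW : CE W) :
    ¬HasDensity (symmDiff diagSet Wᶜ) 0 := by
  obtain ⟨c, rfl⟩ := hW.exists_code
  refine not_hasDensity_zero_of_frequently (ε := 1 / 4) (by norm_num) (frequently_atTop.2 ?_)
  intro N
  set j := Nat.pair (Encodable.encode c) N
  have hN : N ≤ 2 ^ (j + 1) - 1 := by
    have := Nat.right_le_pair (Encodable.encode c) N
    have := j.lt_two_pow_self
    rw [pow_succ]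
    omega
  exact ⟨_, hN, quarter_le_partialDensity_symmDiff (by simp [j])⟩

/-- there is a c.e. set not generically similar to any co-c.e. set;
consequently it is neither coarsely computable nor generically computable. -/
theorem stmt10 :
    ∃ A : Set ℕ, CE A ∧ (∀ W : Set ℕ, CE W → ¬HasDensity (symmDiff A Wᶜ) 0) ∧
      ¬CoarselyComputable A ∧ ¬GenericallyComputable A := by
  refine ⟨diagSet, ce_diagSet, fun _ => not_hasDensity_symmDiff_diagSet_compl, ?_, ?_⟩
  · rintro ⟨C, hC, hsim⟩
    exact not_hasDensity_symmDiff_diagSet_compl hC.ce_compl (by rwa [compl_compl])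
  · intro hgen
    obtain ⟨W, hW, hsim⟩ := hgen.exists_ce_hasDensity_symmDiff_compl
    exact not_hasDensity_symmDiff_diagSet_compl hW hsim
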